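/- For q ∈ (0,1), α ∈ [0,1], and 0 ≤ r ≤ k, the coefficients a_{n,q}(r,k) of T_{n,q,α}(t^k; x) satisfy lim_{n→∞} a_{n,q}(r,k) = q^{r(r-1)/2} (1-q)^{k-r} S_q(k,r). -/

import Mathlib

/-!
Since `|q| < 1`, every `[n - j]_q` tends to `1/(1-q)` as `n → ∞`, and
`[n-2]_q! / [n-r]_q! = [n]_q ⋯ [n-r+1]_q / ([n]_q [n-1]_q)` tends to `(1-q)^(2-r)`. Hence the
bracket in `a_{n,q}(r,k)` tends to
`(1-q)⁻² ((1-α) (S_q(k+1,r+1) - [r+1]_q S_q(k,r+1)) + α S_q(k,r))`,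
which is `(1-q)⁻² S_q(k,r)` by the triangular recurrence
`S_q(k+1,r+1) = S_q(k,r) + [r+1]_q S_q(k,r+1)`; the powers of `1-q` then combine to `(1-q)^(k-r)`.
-/

open Finset Filter Topology

/-- The q-integer `[m]_q = 1 + q + ... + q^{m-1}`, with `[0]_q = 0`. -/
noncomputable def qInt (q : ℝ) (m : ℕ) : ℝ := ∑ i ∈ Finset.range m, q ^ i

/-- The q-factorial `[n]_q! = [1]_q [2]_q ⋯ [n]_q`. -/
noncomputable def qFact (q : ℝ) (n : ℕ) : ℝ := ∏ i ∈ Finset.range n, qInt q (i + 1)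

/-- The q-binomial coefficient `[n]_q!/([k]_q! [n-k]_q!)` (zero if `k > n`). -/
noncomputable def qBinom (q : ℝ) (n k : ℕ) : ℝ :=
  if k ≤ n then qFact q n / (qFact q k * qFact q (n - k)) else 0

/-- The q-Stirling number of the second kind. -/
noncomputable def qStirling (q : ℝ) (k r : ℕ) : ℝ :=
  (1 / (qFact q r * q ^ (r * (r - 1) / 2))) *
    ∑ i ∈ Finset.range (r + 1),
      (-1 : ℝ) ^ i * q ^ (i * (i - 1) / 2) * qBinom q r i * (qInt q (r - i)) ^ k

/-- The q-forward difference operator on sequences: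
`Δ_q^0 f_i = f_i`, `Δ_q^{r+1} f_i = Δ_q^r f_{i+1} - q^r Δ_q^r f_i`. -/
noncomputable def qDiff (q : ℝ) : ℕ → (ℕ → ℝ) → ℕ → ℝ
  | 0, f, i => f i
  | r + 1, f, i => qDiff q r f (i + 1) - q ^ r * qDiff q r f i

/-- The eigenvalues `λ_{k,q}^{(α,n)}` of the (α,q)-Bernstein operator. -/
noncomputable def lamEig (q α : ℝ) (n k : ℕ) : ℝ :=
  q ^ (k * (k - 1) / 2) * qFact q (n - 2) / (qFact q (n - k) * (qInt q n) ^ k) *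
    ((1 - α) * qInt q (n - k) * qInt q (n - 1 + k) + α * qInt q n * qInt q (n - 1))

/-- The coefficients `a_{n,q}(r,k)` of `T_{n,q,α}(t^k; x) = Σ_r a_{n,q}(r,k) x^r`. -/
noncomputable def aCoef (q α : ℝ) (n r k : ℕ) : ℝ :=
  q ^ (r * (r - 1) / 2) * qFact q (n - 2) / ((qInt q n) ^ k * qFact q (n - r)) *
    ((1 - α) * qInt q (n - r) *
        (qInt q (n + r - 1) * qStirling q (k + 1) (r + 1) -
          qInt q (r + 1) * qInt q (n - 1) * qStirling q k (r + 1)) +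
      α * qInt q n * qInt q (n - 1) * qStirling q k r)

/-- The (α,q)-Bernstein operator, via its forward-difference representation
`T_{n,q,α}(f;x) = Σ_{r=0}^n ((1-α) C_q(n-1,r) Δ_q^r g_0 + α C_q(n,r) Δ_q^r f_0) x^r`,
where `f_i = f([i]_q/[n]_q)` and
`g_i = (1 - q^{n-i-1}[i]_q/[n-1]_q) f_i + (q^{n-i-1}[i]_q/[n-1]_q) f_{i+1}`. -/
noncomputable def Talpha (q α : ℝ) (n : ℕ) (f : ℝ → ℝ) (x : ℝ) : ℝ :=
  let fs : ℕ → ℝ := fun i => f (qInt q i / qInt q n)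
  let gs : ℕ → ℝ := fun i =>
    (1 - q ^ (n - i - 1) * qInt q i / qInt q (n - 1)) * fs i +
      (q ^ (n - i - 1) * qInt q i / qInt q (n - 1)) * fs (i + 1)
  ∑ r ∈ Finset.range (n + 1),
    ((1 - α) * qBinom q (n - 1) r * qDiff q r gs 0 + α * qBinom q n r * qDiff q r fs 0) * x ^ r

lemma qInt_zero (q : ℝ) : qInt q 0 = 0 := by
  simp [qInt]

lemma qInt_add (q : ℝ) (a b : ℕ) : qInt q (a + b) = qInt q a + q ^ a * qInt q b := by
  simp [qInt, sum_range_add, pow_add, mul_sum]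

lemma qInt_pos {q : ℝ} (hq : 0 < q) {m : ℕ} (hm : 0 < m) : 0 < qInt q m :=
  sum_pos (fun i _ => pow_pos hq i) (nonempty_range_iff.mpr hm.ne')

lemma qFact_pos {q : ℝ} (hq : 0 < q) (n : ℕ) : 0 < qFact q n :=
  prod_pos fun i _ => qInt_pos hq i.succ_pos

lemma qFact_succ (q : ℝ) (n : ℕ) : qFact q (n + 1) = qFact q n * qInt q (n + 1) :=
  prod_range_succ _ n

lemma qFact_eq_qFact_sub_mul_prod (q : ℝ) {r n : ℕ} (h : r ≤ n) :
    qFact q n = qFact q (n - r) * ∏ i ∈ range r, qInt q (n - i) := by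
  obtain ⟨m, rfl⟩ := Nat.exists_eq_add_of_le' h
  rw [qFact, prod_range_add, Nat.add_sub_cancel,
    ← prod_range_reflect (fun i => qInt q (m + r - i))]
  congr 1
  refine prod_congr rfl fun i hi => ?_
  have := mem_range.mp hi
  congr 1
  omega

lemma qInt_succ_mul_qBinom_succ {q : ℝ} (hq : 0 < q) {i r : ℕ} (hi : i ≤ r) :
    qInt q (i + 1) * qBinom q (r + 1) (i + 1) = qInt q (r + 1) * qBinom q r i := by
  rw [qBinom, qBinom, if_pos (by omega), if_pos hi, Nat.succ_sub_succ, qFact_succ, qFact_succ]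
  have := (qFact_pos hq i).ne'
  have := (qFact_pos hq (r - i)).ne'
  have := (qInt_pos hq i.succ_pos).ne'
  field_simp

noncomputable def qStirlingSum (q : ℝ) (k r : ℕ) : ℝ :=
  ∑ i ∈ range (r + 1),
    (-1 : ℝ) ^ i * q ^ (i * (i - 1) / 2) * qBinom q r i * qInt q (r - i) ^ k

lemma qStirling_eq_qStirlingSum (q : ℝ) (k r : ℕ) :
    qStirling q k r = qStirlingSum q k r / (qFact q r * q ^ (r * (r - 1) / 2)) := by
  rw [qStirling, qStirlingSum, one_div_mul_eq_div]

lemma qStirlingSum_succ_succ {q : ℝ} (hq : 0 < q) (k r : ℕ) :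
    qStirlingSum q (k + 1) (r + 1) =
      qInt q (r + 1) * (q ^ r * qStirlingSum q k r + qStirlingSum q k (r + 1)) := by
  set t : ℕ → ℕ → ℝ := fun r i =>
    (-1 : ℝ) ^ i * q ^ (i * (i - 1) / 2) * qBinom q r i * qInt q (r - i) ^ k
  -- `[r+1-i]_q = [r+1]_q - q^(r+1-i) [i]_q`
  have hsplit : ∀ i ∈ range (r + 2),
      (-1 : ℝ) ^ i * q ^ (i * (i - 1) / 2) * qBinom q (r + 1) i * qInt q (r + 1 - i) ^ (k + 1) =
        qInt q (r + 1) * t (r + 1) i - q ^ (r + 1 - i) * qInt q i * t (r + 1) i := by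
    intro i hi
    have h := qInt_add q (r + 1 - i) i
    rw [Nat.sub_add_cancel (by have := mem_range.mp hi; omega)] at h
    simp only [t, pow_succ, h]
    ring
  have hshift : ∀ j ∈ range (r + 1),
      q ^ (r + 1 - (j + 1)) * qInt q (j + 1) * t (r + 1) (j + 1) =
        -(qInt q (r + 1) * (q ^ r * t r j)) := by
    intro j hj
    have hjr : j ≤ r := by have := mem_range.mp hj; omega
    have hpow : q ^ (j * (j - 1) / 2 + j) * q ^ (r - j) = q ^ (j * (j - 1) / 2) * q ^ r := by
      rw [pow_add, mul_assoc, ← pow_add, Nat.add_sub_cancel' hjr]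
    simp only [t, Nat.add_sub_add_right]
    rw [Nat.triangle_succ]
    linear_combination
      (-(-1 : ℝ) ^ j * qInt q (r - j) ^ k * q ^ (j * (j - 1) / 2 + j) * q ^ (r - j)) *
          qInt_succ_mul_qBinom_succ hq hjr +
        (-(-1 : ℝ) ^ j * qInt q (r - j) ^ k * qInt q (r + 1) * qBinom q r j) * hpow
  rw [qStirlingSum, sum_congr rfl hsplit, sum_sub_distrib, ← mul_sum,
    sum_range_succ' (fun i => q ^ (r + 1 - i) * qInt q i * t (r + 1) i), sum_congr rfl hshift,
    qInt_zero, sum_neg_distrib, ← mul_sum, ← mul_sum]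
  simp only [qStirlingSum, t]
  ring

lemma qStirling_succ_succ {q : ℝ} (hq : 0 < q) (k r : ℕ) :
    qStirling q (k + 1) (r + 1) = qStirling q k r + qInt q (r + 1) * qStirling q k (r + 1) := by
  rw [qStirling_eq_qStirlingSum, qStirling_eq_qStirlingSum, qStirling_eq_qStirlingSum,
    qStirlingSum_succ_succ hq, qFact_succ, Nat.triangle_succ, pow_add]
  have := (qFact_pos hq r).ne'
  have := (qInt_pos hq r.succ_pos).ne'
  have := pow_ne_zero (r * (r - 1) / 2) hq.ne'
  have := pow_ne_zero r hq.ne'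
  field_simp

lemma tendsto_qInt {q : ℝ} (hq : |q| < 1) :
    Tendsto (qInt q) atTop (𝓝 (1 - q)⁻¹) :=
  (hasSum_geometric_of_abs_lt_one hq).tendsto_sum_nat

lemma tendsto_qInt_comp {q : ℝ} (hq : |q| < 1) {f : ℕ → ℕ} (hf : Tendsto f atTop atTop) :
    Tendsto (fun n => qInt q (f n)) atTop (𝓝 (1 - q)⁻¹) :=
  (tendsto_qInt hq).comp hf

lemma qFact_sub_two_div_qFact_sub {q : ℝ} (hq : 0 < q) {n r : ℕ} (h2 : 2 ≤ n) (hr : r ≤ n) :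
    qFact q (n - 2) / qFact q (n - r) =
      (∏ i ∈ range r, qInt q (n - i)) / (qInt q n * qInt q (n - 1)) := by
  have h := (qFact_eq_qFact_sub_mul_prod q h2).symm.trans (qFact_eq_qFact_sub_mul_prod q hr)
  simp only [prod_range_succ, prod_range_zero, one_mul, Nat.sub_zero] at h
  have := (qFact_pos hq (n - r)).ne'
  have := (qInt_pos hq (by omega : 0 < n)).ne'
  have := (qInt_pos hq (by omega : 0 < n - 1)).ne'
  rw [div_eq_div_iff (by assumption) (by positivity)]
  linear_combination h

lemma tendsto_qFact_sub_two_div_qFact_sub {q : ℝ} (hq0 : 0 < q) (hq : |q| < 1) (r : ℕ) :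
    Tendsto (fun n => qFact q (n - 2) / qFact q (n - r)) atTop
      (𝓝 ((1 - q)⁻¹ ^ r / ((1 - q)⁻¹ * (1 - q)⁻¹))) := by
  have hprod :
      Tendsto (fun n => ∏ i ∈ range r, qInt q (n - i)) atTop (𝓝 ((1 - q)⁻¹ ^ r)) := by
    simpa using tendsto_finsetProd (range r)
      fun i _ => tendsto_qInt_comp hq (tendsto_sub_atTop_nat i)
  have hden := (tendsto_qInt hq).mul (tendsto_qInt_comp hq (tendsto_sub_atTop_nat 1))
  have hc : (1 - q)⁻¹ ≠ 0 := inv_ne_zero (sub_ne_zero.mpr (abs_lt.mp hq).2.ne')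
  refine (hprod.div hden (mul_ne_zero hc hc)).congr' ?_
  filter_upwards [eventually_ge_atTop (r + 2)] with n hn
  exact (qFact_sub_two_div_qFact_sub hq0 (by omega) (by omega)).symm

lemma tendsto_aCoef_bracket {q : ℝ} (hq0 : 0 < q) (hq : |q| < 1) (α : ℝ) (k r : ℕ) :
    Tendsto (fun n => (1 - α) * qInt q (n - r) *
        (qInt q (n + r - 1) * qStirling q (k + 1) (r + 1) -
          qInt q (r + 1) * qInt q (n - 1) * qStirling q k (r + 1)) +
        α * qInt q n * qInt q (n - 1) * qStirling q k r) atTop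
      (𝓝 ((1 - q)⁻¹ * (1 - q)⁻¹ * qStirling q k r)) := by
  have hsub (j : ℕ) := tendsto_qInt_comp hq (tendsto_sub_atTop_nat j)
  have hadd : Tendsto (fun n => qInt q (n + r - 1)) atTop (𝓝 (1 - q)⁻¹) :=
    tendsto_qInt_comp hq ((tendsto_sub_atTop_nat 1).comp (tendsto_add_atTop_nat r))
  have h := (((hsub r).const_mul (1 - α)).mul
    ((hadd.mul_const (qStirling q (k + 1) (r + 1))).sub
      (((hsub 1).const_mul (qInt q (r + 1))).mul_const (qStirling q k (r + 1))))).add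
    ((((tendsto_qInt hq).const_mul α).mul (hsub 1)).mul_const (qStirling q k r))
  convert h using 2
  linear_combination (-(1 - α) * (1 - q)⁻¹ * (1 - q)⁻¹) * qStirling_succ_succ hq0 k r

theorem aCoef_limit_q_lt_one_general (q α : ℝ) (hq0 : 0 < q) (hq1 : q < 1)
    (r k : ℕ) (hr : r ≤ k) :
    Filter.Tendsto (fun n : ℕ => aCoef q α n r k) Filter.atTop
      (nhds (q ^ (r * (r - 1) / 2) * (1 - q) ^ (k - r) * qStirling q k r)) := by
  have hq : |q| < 1 := abs_lt.mpr ⟨by linarith, hq1⟩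
  have h1q : 1 - q ≠ 0 := by linarith
  have h := (((tendsto_const_nhds (x := q ^ (r * (r - 1) / 2))).mul
    (tendsto_qFact_sub_two_div_qFact_sub hq0 hq r)).div
      ((tendsto_qInt hq).pow k) (pow_ne_zero k (inv_ne_zero h1q))).mul
    (tendsto_aCoef_bracket hq0 hq α k r)
  convert h using 2 with n
  · rw [aCoef, Pi.div_apply]
    ring
  · obtain ⟨m, rfl⟩ := Nat.exists_eq_add_of_le hr
    rw [Nat.add_sub_cancel_left]
    simp only [inv_pow]
    field_simp
    ring

theorem aCoef_limit_q_lt_one (q α : ℝ) (hq0 : 0 < q) (hq1 : q < 1)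
    (hα : α ∈ Set.Icc (0 : ℝ) 1) (r k : ℕ) (hk : 1 ≤ k) (hr : r ≤ k) :
    Filter.Tendsto (fun n : ℕ => aCoef q α n r k) Filter.atTop
      (nhds (q ^ (r * (r - 1) / 2) * (1 - q) ^ (k - r) * qStirling q k r)) :=
  aCoef_limit_q_lt_one_general q α hq0 hq1 r k hr
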